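/- arXiv:2410.16051 — 10 statements merged into one kernel-verified Lean document; each statement's English description precedes it below -/
import Mathlib

section
/- A nondecreasing sequence u_1 ≤ u_2 ≤ ... of positive integers is complete (every positive integer is a sum of distinct terms of the sequence) if and only if u_1 = 1 and u_n ≤ u_1 + u_2 + ... + u_{n-1} + 1 for all n ≥ 2. -/
/-- A sequence of positive integers is complete if every positive integer is a sum of
distinct terms (i.e. a sum over a finite set of indices). -/
def CompleteSequence (u : ℕ → ℕ) : Prop :=
  ∀ N : ℕ, 0 < N → ∃ s : Finset ℕ, ∑ i ∈ s, u i = N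

lemma brown_rep (u : ℕ → ℕ) (h0 : u 0 = 1)
    (h : ∀ n, 1 ≤ n → u n ≤ (∑ i ∈ Finset.range n, u i) + 1) :
    ∀ n N, N ≤ ∑ i ∈ Finset.range n, u i →
      ∃ s ⊆ Finset.range n, ∑ i ∈ s, u i = N := by
  intro n
  induction n with
  | zero =>
    intro N hN
    simp only [Finset.range_zero, Finset.sum_empty, Nat.le_zero] at hN
    exact ⟨∅, by simp [hN]⟩
  | succ n ih =>
    intro N hN
    rw [Finset.sum_range_succ] at hN
    by_cases hle : N ≤ ∑ i ∈ Finset.range n, u i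
    · obtain ⟨s, hs, hsum⟩ := ih N hle
      exact ⟨s, hs.trans (Finset.range_subset_range.2 (Nat.le_succ n)), hsum⟩
    · push_neg at hle
      have hun : u n ≤ (∑ i ∈ Finset.range n, u i) + 1 := by
        rcases Nat.eq_zero_or_pos n with rfl | hn
        · simp [h0]
        · exact h n hn
      have hunN : u n ≤ N := hun.trans hle
      obtain ⟨s, hs, hsum⟩ := ih (N - u n) (by omega)
      have hns : n ∉ s := fun hmem => by simpa using hs hmem
      refine ⟨insert n s, ?_, ?_⟩
      · intro x hx
        rcases Finset.mem_insert.1 hx with rfl | hx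
        · exact Finset.self_mem_range_succ x
        · exact (Finset.range_subset_range.2 (Nat.le_succ n)) (hs hx)
      · rw [Finset.sum_insert hns, hsum]
        omega

theorem brown_criterion (u : ℕ → ℕ) (hpos : ∀ n, 0 < u n) (hmono : Monotone u) :
    CompleteSequence u ↔
      (u 0 = 1 ∧ ∀ n, 1 ≤ n → u n ≤ (∑ i ∈ Finset.range n, u i) + 1) := by
  constructor
  · intro hc
    constructor
    · obtain ⟨s, hs⟩ := hc 1 one_pos
      have hne : s.Nonempty := by
        rcases s.eq_empty_or_nonempty with rfl | h
        · simp at hs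
        · exact h
      obtain ⟨i, hi⟩ := hne
      have h1 : u i ≤ 1 := hs ▸ Finset.single_le_sum (fun j _ => Nat.zero_le _) hi
      have h2 : u 0 ≤ u i := hmono (Nat.zero_le i)
      have := hpos 0
      omega
    · intro n hn
      by_contra hlt
      push_neg at hlt
      obtain ⟨s, hs⟩ := hc ((∑ i ∈ Finset.range n, u i) + 1) (Nat.succ_pos _)
      by_cases hsub : s ⊆ Finset.range n
      · have : ∑ i ∈ s, u i ≤ ∑ i ∈ Finset.range n, u i :=
          Finset.sum_le_sum_of_subset hsub
        omega
      · obtain ⟨j, hj, hjn⟩ := Finset.not_subset.1 hsub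
        have hjn' : n ≤ j := by simpa using hjn
        have h1 : u n ≤ u j := hmono hjn'
        have h2 : u j ≤ ∑ i ∈ s, u i :=
          Finset.single_le_sum (fun k _ => Nat.zero_le _) hj
        omega
  · rintro ⟨h0, h⟩ N hN
    have hNle : N ≤ ∑ i ∈ Finset.range N, u i := by
      calc N = ∑ _i ∈ Finset.range N, 1 := by simp
        _ ≤ ∑ i ∈ Finset.range N, u i := Finset.sum_le_sum (fun i _ => hpos i)
    obtain ⟨s, _, hsum⟩ := brown_rep u h0 h N N hNle
    exact ⟨s, hsum⟩
end

section
/- Let a_1 ≤ a_2 ≤ ... ≤ a_k be positive integers and t a positive integer. The multiset {a_1,...,a_k} is t-distributable if and only if a_i ≤ ⌈s_i / t⌉ for all i ∈ {1,...,k}, where s_i = a_1 + ... + a_i. -/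
/-- A multiset `{a 0, …, a (k-1)}` of positive integers is `t`-distributable if for every
multiset of `t` nonnegative integers with the same total sum, the index set can be
partitioned into `t` parts with the prescribed sums. -/
def TDistributable {k : ℕ} (a : Fin k → ℕ) (t : ℕ) : Prop :=
  ∀ σ : Fin t → ℕ, (∑ j, σ j) = (∑ i, a i) →
    ∃ f : Fin k → Fin t, ∀ j, ∑ i ∈ Finset.univ.filter (fun i => f i = j), a i = σ j

open Finset

/-- Distributing `y ≤ n*c` greedily into `n` chunks of capacity `c` sums to `y`. -/
lemma sum_min_chunks (c : ℕ) : ∀ (n y : ℕ), y ≤ n * c →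
    ∑ j : Fin n, min c (y - j.val * c) = y := by
  intro n
  induction n with
  | zero => intro y hy; simpa using (Nat.le_zero.mp (by simpa using hy)).symm
  | succ n ih =>
    intro y hy
    rw [Fin.sum_univ_castSucc]
    simp only [Fin.coe_castSucc, Fin.val_last]
    by_cases h : y ≤ n * c
    · rw [ih y h]
      have h0 : y - n * c = 0 := Nat.sub_eq_zero_of_le h
      simp [h0]
    · push_neg at h
      have h1 : ∀ j : Fin n, min c (y - j.val * c) = c := by
        intro j
        have hj : j.val + 1 ≤ n := j.isLt
        have h2 : j.val * c + c ≤ n * c := by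
          calc j.val * c + c = (j.val + 1) * c := by ring
          _ ≤ n * c := Nat.mul_le_mul_right c hj
        have : c ≤ y - j.val * c := Nat.le_sub_of_add_le (by omega)
        exact min_eq_left this
      rw [Finset.sum_congr rfl (fun j _ => h1 j), Finset.sum_const, Finset.card_univ,
        Fintype.card_fin, smul_eq_mul]
      have hyc : y ≤ n * c + c := by
        have : (n + 1) * c = n * c + c := by ring
        omega
      have : min c (y - n * c) = y - n * c := min_eq_right (by omega)
      rw [this]
      omega

/-- Sufficiency, by induction on `k`, with the ceiling condition written multiplicatively. -/
lemma tdist_of_cond (t : ℕ) (ht : 0 < t) : ∀ (k : ℕ) (a : Fin k → ℕ),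
    (∀ i : Fin k, a i * t ≤ (∑ j ∈ Finset.univ.filter (· ≤ i), a j) + (t - 1)) →
    TDistributable a t := by
  intro k
  induction k with
  | zero =>
    intro a _ σ hσ
    refine ⟨Fin.elim0, fun j => ?_⟩
    have h0 : ∑ j, σ j = 0 := by simpa using hσ
    have : σ j = 0 := by
      have := Finset.sum_eq_zero_iff.mp h0 j (mem_univ j)
      exact this
    simp [this]
  | succ k ih =>
    intro a ha σ hσ
    -- pick an index of maximal σ
    obtain ⟨j₀, -, hj₀⟩ := Finset.exists_max_image (univ : Finset (Fin t)) σ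
      (univ_nonempty_iff.mpr (Fin.pos_iff_nonempty.mp ht))
    have hmax : ∑ j, σ j ≤ t * σ j₀ := by
      calc ∑ j, σ j ≤ ∑ _j : Fin t, σ j₀ :=
            Finset.sum_le_sum (fun j _ => hj₀ j (mem_univ j))
        _ = t * σ j₀ := by simp [mul_comm]
    have hfull : (univ : Finset (Fin (k+1))).filter (· ≤ Fin.last k) = univ := by
      apply Finset.filter_true_of_mem; intro x _; exact Fin.le_last x
    have halast : a (Fin.last k) ≤ σ j₀ := by
      have h1 := ha (Fin.last k)
      rw [hfull] at h1
      rw [← hσ] at h1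
      have h2 : a (Fin.last k) * t < (σ j₀ + 1) * t := by
        have : (σ j₀ + 1) * t = t * σ j₀ + t := by ring
        omega
      exact Nat.lt_succ_iff.mp (Nat.lt_of_mul_lt_mul_right h2)
    set a' : Fin k → ℕ := a ∘ Fin.castSucc with ha'def
    set σ' : Fin t → ℕ := Function.update σ j₀ (σ j₀ - a (Fin.last k)) with hσ'def
    have ha' : ∀ i : Fin k, a' i * t ≤ (∑ j ∈ Finset.univ.filter (· ≤ i), a' j) + (t - 1) := by
      intro i
      have hsum : ∑ j ∈ Finset.univ.filter (· ≤ Fin.castSucc i), a j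
          = ∑ j ∈ Finset.univ.filter (· ≤ i), a' j := by
        rw [Finset.sum_filter, Finset.sum_filter, Fin.sum_univ_castSucc]
        have hlast : ¬ (Fin.last k ≤ Fin.castSucc i) :=
          not_le.mpr (Fin.castSucc_lt_last i)
        simp only [hlast, if_false, add_zero]
        apply Finset.sum_congr rfl
        intro j _
        simp [Fin.castSucc_le_castSucc_iff, ha'def]
      have := ha (Fin.castSucc i)
      rw [hsum] at this
      exact this
    have hσ'sum : ∑ j, σ' j = ∑ i, a' i := by
      have h1 : ∑ j, σ' j = (σ j₀ - a (Fin.last k)) + ∑ j ∈ univ \ {j₀}, σ j := by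
        rw [hσ'def]
        exact Finset.sum_update_of_mem (mem_univ j₀) σ _
      have h2 : ∑ j, σ j = ∑ j ∈ univ \ {j₀}, σ j + σ j₀ :=
        Finset.sum_eq_sum_sdiff_singleton_add (mem_univ j₀) σ
      have h3 : ∑ i, a i = ∑ i, a' i + a (Fin.last k) := by
        rw [Fin.sum_univ_castSucc]; rfl
      omega
    obtain ⟨f', hf'⟩ := ih a' ha' σ' hσ'sum
    refine ⟨Fin.snoc f' j₀, fun j => ?_⟩
    rw [Finset.sum_filter, Fin.sum_univ_castSucc]
    simp only [Fin.snoc_castSucc, Fin.snoc_last]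
    have hfst : ∑ i : Fin k, (if f' i = j then a (Fin.castSucc i) else 0) = σ' j := by
      rw [← hf' j, Finset.sum_filter]; rfl
    rw [hfst]
    by_cases hj : j₀ = j
    · subst hj
      rw [if_pos rfl, hσ'def, Function.update_self]
      omega
    · simp only [if_neg hj, add_zero]
      rw [hσ'def, Function.update_of_ne (Ne.symm hj)]

theorem t_distributable_iff (k t : ℕ) (ht : 0 < t) (a : Fin k → ℕ)
    (hpos : ∀ i, 0 < a i) (hmono : Monotone a) :
    TDistributable a t ↔
      ∀ i : Fin k, a i ≤ ((∑ j ∈ Finset.Iic i, a j) + t - 1) / t := by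
  have hIic : ∀ i : Fin k, Finset.Iic i = Finset.univ.filter (· ≤ i) := by
    intro i; ext x; simp
  constructor
  · -- necessity
    intro hdist i₀
    by_contra hcon
    rw [Nat.le_div_iff_mul_le ht, not_le] at hcon
    set s : ℕ := ∑ j ∈ Finset.Iic i₀, a j with hsdef
    have hviol : s + t ≤ a i₀ * t := by omega
    have hs_ge : a i₀ ≤ s :=
      Finset.single_le_sum (fun j _ => Nat.zero_le _) (Finset.mem_Iic.mpr le_rfl)
    have ha2 : 2 ≤ a i₀ := by nlinarith [hpos i₀]
    have ht2 : 2 ≤ t := by nlinarith [hpos i₀]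
    obtain ⟨n, rfl⟩ : ∃ n, t = n + 1 := ⟨t - 1, by omega⟩
    set c : ℕ := a i₀ - 1 with hcdef
    set small : Finset (Fin k) := Finset.univ.filter (fun m => a m < a i₀) with hsmalldef
    set s₀ : ℕ := ∑ m ∈ small, a m with hs₀def
    have hsmall_sub : small ⊆ Finset.Iio i₀ := by
      intro m hm
      rw [hsmalldef, Finset.mem_filter] at hm
      rw [Finset.mem_Iio]
      by_contra h
      exact absurd (hmono (not_lt.mp h)) (not_le.mpr hm.2)
    have hIic_split : s = (∑ m ∈ Finset.Iio i₀, a m) + a i₀ := by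
      rw [hsdef, ← Finset.Iio_insert, Finset.sum_insert (by simp)]
      omega
    have hs₀ : s₀ + a i₀ ≤ s := by
      have : s₀ ≤ ∑ m ∈ Finset.Iio i₀, a m :=
        Finset.sum_le_sum_of_subset hsmall_sub
      omega
    set S : ℕ := ∑ i, a i with hSdef
    have hS : s ≤ S :=
      Finset.sum_le_sum_of_subset (Finset.subset_univ _)
    set y : ℕ := s₀ + 1 with hydef
    have hy1 : y ≤ n * c := by
      have hexp : (n + 1) * a i₀ + 1 = n * c + (n + 1) + a i₀ := by
        rw [hcdef]
        zify [show 1 ≤ a i₀ by omega]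
        ring
      have : a i₀ * (n + 1) = (n + 1) * a i₀ := by ring
      omega
    have hyS : y ≤ S := by omega
    set σ : Fin (n + 1) → ℕ :=
      Fin.snoc (fun j : Fin n => min c (y - j.val * c)) (S - y) with hσdef
    have hσsum : ∑ j, σ j = ∑ i, a i := by
      rw [hσdef, Fin.sum_univ_castSucc]
      simp only [Fin.snoc_castSucc, Fin.snoc_last]
      rw [sum_min_chunks c n y hy1]
      omega
    obtain ⟨f, hf⟩ := hdist σ hσsum
    have hfib_le : ∀ i, a i ≤ σ (f i) := by
      intro i
      rw [← hf (f i)]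
      exact Finset.single_le_sum (fun _ _ => Nat.zero_le _)
        (Finset.mem_filter.mpr ⟨Finset.mem_univ i, rfl⟩)
    have hsmall_of_ne : ∀ i, f i ≠ Fin.last n → a i < a i₀ := by
      intro i hi
      obtain ⟨j, hj⟩ := Fin.exists_castSucc_eq.mpr hi
      have : σ (f i) ≤ c := by
        rw [← hj, hσdef, Fin.snoc_castSucc]
        exact min_le_left _ _
      have := hfib_le i
      omega
    have hlastsum : ∑ i ∈ Finset.univ.filter (fun i => f i = Fin.last n), a i = S - y := by
      rw [hf (Fin.last n), hσdef, Fin.snoc_last]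
    have hnotlast : ∑ i ∈ Finset.univ.filter (fun i => ¬ (f i = Fin.last n)), a i = y := by
      have := Finset.sum_filter_add_sum_filter_not (Finset.univ : Finset (Fin k))
        (fun i => f i = Fin.last n) a
      rw [hlastsum] at this
      rw [← hSdef] at this
      omega
    have hsub : Finset.univ.filter (fun i => ¬ (f i = Fin.last n)) ⊆ small := by
      intro i hi
      rw [Finset.mem_filter] at hi
      rw [hsmalldef, Finset.mem_filter]
      exact ⟨Finset.mem_univ i, hsmall_of_ne i hi.2⟩
    have : y ≤ s₀ := by
      rw [← hnotlast, hs₀def]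
      exact Finset.sum_le_sum_of_subset hsub
    omega
  · -- sufficiency
    intro hcond
    apply tdist_of_cond t ht
    intro i
    have := hcond i
    rw [Nat.le_div_iff_mul_le ht] at this
    rw [← hIic i]
    omega
end

section
/- Let a_1,...,a_m be nonzero integers with sum σ, c an integer, r > 1, and λ ≥ 1. If the r-colour Rado number N = Rad_r(a_1,...,a_m; c + σ) exists, then Rad_r(a_1,...,a_m; λc + σ) exists and is at most 1 + λ(N − 1). -/
/-- `χ` admits a monochromatic solution of `∑ a i * x i = c` with all variables in
`{1,…,N}`. -/
def GenMonoSoln {m : ℕ} (a : Fin m → ℤ) (c : ℤ) (r : ℕ) (N : ℕ) (χ : ℤ → Fin r) : Prop :=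
  ∃ x : Fin m → ℤ, (∀ i, x i ∈ Finset.Icc (1 : ℤ) N) ∧ (∑ i, a i * x i = c) ∧
    ∀ i j, χ (x i) = χ (x j)

theorem rado_reduction (m : ℕ) (a : Fin m → ℤ) (ha : ∀ i, a i ≠ 0) (c : ℤ) (r : ℕ)
    (hr : 1 < r) (lam : ℕ) (hlam : 1 ≤ lam) (N : ℕ)
    (hN : IsLeast {M : ℕ | ∀ χ : ℤ → Fin r, GenMonoSoln a (c + ∑ i, a i) r M χ} N) :
    ∃ R : ℕ,
      IsLeast {M : ℕ | ∀ χ : ℤ → Fin r, GenMonoSoln a ((lam : ℤ) * c + ∑ i, a i) r M χ} R ∧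
      R ≤ 1 + lam * (N - 1) := by
  have key : (1 + lam * (N - 1)) ∈
      {M : ℕ | ∀ χ : ℤ → Fin r, GenMonoSoln a ((lam : ℤ) * c + ∑ i, a i) r M χ} := by
    intro χ
    rcases eq_or_ne m 0 with hm | hm
    · subst hm
      obtain ⟨x, hx, hsum, -⟩ := hN.1 (fun _ => ⟨0, by omega⟩)
      simp only [Finset.univ_eq_empty, Finset.sum_empty] at hsum ⊢
      refine ⟨fun i => i.elim0, fun i => i.elim0, ?_, fun i => i.elim0⟩
      have hc : c = 0 := by linarith
      simp [hc]
    · have hN1 : 1 ≤ N := by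
        obtain ⟨x, hx, -, -⟩ := hN.1 (fun _ => ⟨0, by omega⟩)
        have h := hx ⟨0, Nat.pos_of_ne_zero hm⟩
        simp only [Finset.mem_Icc] at h
        have : (1 : ℤ) ≤ (N : ℤ) := le_trans h.1 h.2
        exact_mod_cast this
      have hlamZ : (1 : ℤ) ≤ (lam : ℤ) := by exact_mod_cast hlam
      obtain ⟨x, hx, hsum, hmono⟩ := hN.1 (fun y => χ ((lam : ℤ) * y - lam + 1))
      refine ⟨fun i => (lam : ℤ) * x i - lam + 1, ?_, ?_, fun i j => hmono i j⟩
      · intro i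
        have h := hx i
        simp only [Finset.mem_Icc] at h ⊢
        have hcast : ((1 + lam * (N - 1) : ℕ) : ℤ) = 1 + (lam : ℤ) * ((N : ℤ) - 1) := by
          have : ((N - 1 : ℕ) : ℤ) = (N : ℤ) - 1 := by
            rw [Nat.cast_sub hN1]; simp
          push_cast [this]; ring
        rw [hcast]
        constructor
        · nlinarith [h.1, h.2]
        · nlinarith [h.1, h.2]
      · have expand : ∑ i, a i * ((lam : ℤ) * x i - lam + 1)
            = (lam : ℤ) * (∑ i, a i * x i) - (lam : ℤ) * (∑ i, a i) + ∑ i, a i := by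
          rw [Finset.mul_sum, Finset.mul_sum, ← Finset.sum_sub_distrib,
            ← Finset.sum_add_distrib]
          exact Finset.sum_congr rfl fun i _ => by ring
        rw [expand, hsum]; ring
  refine ⟨sInf _, ⟨Nat.sInf_mem ⟨_, key⟩, fun M hM => Nat.sInf_le hM⟩, Nat.sInf_le key⟩
end

section
/- Let a_1,...,a_{m-1} be positive integers with sum S, and let c be an integer with c < S − 1 and cS even. Then the 2-colouring Δ of {0,1,...,(S−1−c)(S+2)−1} given by Δ(x) = 0 if x ∈ [0, S−2−c] ∪ [(S−1−c)(S+1), (S−1−c)(S+2)−1] and Δ(x) = 1 otherwise admits no monochromatic solution to a_1 x_1 + ... + a_{m-1} x_{m-1} − x_m = c − (S−1). Consequently, Rad_2(a_1,...,a_{m-1},−1; c) ≥ (S−1−c)(S+2) + 1. -/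
/-- `χ` admits a monochromatic solution of `a₁x₁ + ⋯ + a_{m-1}x_{m-1} - x_m = c`
with all variables in `{1,…,N}`. -/
def MonoSoln {k : ℕ} (a : Fin k → ℕ) (c : ℤ) (r : ℕ) (N : ℕ) (χ : ℤ → Fin r) : Prop :=
  ∃ (x : Fin k → ℤ) (y : ℤ),
    (∀ i, x i ∈ Finset.Icc (1 : ℤ) N) ∧ y ∈ Finset.Icc (1 : ℤ) N ∧
    ((∑ i, (a i : ℤ) * x i) - y = c) ∧ (∀ i, χ (x i) = χ y)

/-- `R` is the `r`-colour Rado number of `a₁x₁ + ⋯ + a_{m-1}x_{m-1} - x_m = c`. -/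
def IsRado {k : ℕ} (a : Fin k → ℕ) (c : ℤ) (r : ℕ) (R : ℕ) : Prop :=
  IsLeast {N : ℕ | ∀ χ : ℤ → Fin r, MonoSoln a c r N χ} R

/-- The lower-bound colouring for `c < S - 1`. -/
def Δ₇ (S c : ℤ) : ℤ → Fin 2 := fun x =>
  if (0 ≤ x ∧ x ≤ S - 2 - c) ∨
      ((S - 1 - c) * (S + 1) ≤ x ∧ x ≤ (S - 1 - c) * (S + 2) - 1) then 0 else 1

theorem rado_lower_c_lt (k : ℕ) (hk : 0 < k) (a : Fin k → ℕ) (hpos : ∀ i, 0 < a i)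
    (S c : ℤ) (hS : S = ∑ i, (a i : ℤ)) (hc : c < S - 1) (he : Even (c * S)) :
    (¬ ∃ (x : Fin k → ℤ) (y : ℤ),
        (∀ i, x i ∈ Finset.Icc (0 : ℤ) ((S - 1 - c) * (S + 2) - 1)) ∧
        y ∈ Finset.Icc (0 : ℤ) ((S - 1 - c) * (S + 2) - 1) ∧
        ((∑ i, (a i : ℤ) * x i) - y = c - (S - 1)) ∧
        (∀ i, Δ₇ S c (x i) = Δ₇ S c y)) ∧
    (∀ R : ℕ, IsRado a c 2 R → (S - 1 - c) * (S + 2) + 1 ≤ (R : ℤ)) := by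
  have hai : ∀ i, (1:ℤ) ≤ (a i : ℤ) := fun i => by exact_mod_cast hpos i
  have hS1 : (1:ℤ) ≤ S := by
    rw [hS]
    calc (1:ℤ) ≤ (k:ℤ) := by exact_mod_cast hk
    _ = ∑ _i : Fin k, (1:ℤ) := by simp
    _ ≤ ∑ i, (a i:ℤ) := Finset.sum_le_sum (fun i _ => hai i)
  have hd1 : (1:ℤ) ≤ S - 1 - c := by linarith
  have hΔ : ∀ z : ℤ, Δ₇ S c z = 0 ↔ ((0 ≤ z ∧ z ≤ S - 2 - c) ∨
      ((S - 1 - c) * (S + 1) ≤ z ∧ z ≤ (S - 1 - c) * (S + 2) - 1)) := by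
    intro z
    unfold Δ₇
    split
    · simp_all
    · simp_all
  have hmain : ¬ ∃ (x : Fin k → ℤ) (y : ℤ),
        (∀ i, x i ∈ Finset.Icc (0 : ℤ) ((S - 1 - c) * (S + 2) - 1)) ∧
        y ∈ Finset.Icc (0 : ℤ) ((S - 1 - c) * (S + 2) - 1) ∧
        ((∑ i, (a i : ℤ) * x i) - y = c - (S - 1)) ∧
        (∀ i, Δ₇ S c (x i) = Δ₇ S c y) := by
    rintro ⟨x, y, hx, hy, heq, hcol⟩
    have hxl : ∀ i, 0 ≤ x i := fun i => (Finset.mem_Icc.mp (hx i)).1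
    have hxu : ∀ i, x i ≤ (S-1-c)*(S+2) - 1 := fun i => (Finset.mem_Icc.mp (hx i)).2
    have hyl : (0:ℤ) ≤ y := (Finset.mem_Icc.mp hy).1
    have hyu : y ≤ (S-1-c)*(S+2) - 1 := (Finset.mem_Icc.mp hy).2
    have hsum0 : (0:ℤ) ≤ ∑ j, (a j:ℤ) * x j :=
      Finset.sum_nonneg (fun j _ => mul_nonneg (by linarith [hai j]) (hxl j))
    by_cases hy0 : (0 ≤ y ∧ y ≤ S - 2 - c) ∨
        ((S - 1 - c) * (S + 1) ≤ y ∧ y ≤ (S - 1 - c) * (S + 2) - 1)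
    · -- y has colour 0, so all x i colour 0
      have hx0 : ∀ i, (0 ≤ x i ∧ x i ≤ S - 2 - c) ∨
          ((S - 1 - c) * (S + 1) ≤ x i ∧ x i ≤ (S - 1 - c) * (S + 2) - 1) := by
        intro i
        have h := hcol i
        rw [(hΔ y).mpr hy0] at h
        exact (hΔ (x i)).mp h
      by_cases hhigh : ∃ i, (S-1-c)*(S+1) ≤ x i
      · obtain ⟨i, hi⟩ := hhigh
        have h1 : (a i : ℤ) * x i ≤ ∑ j, (a j : ℤ) * x j :=
          Finset.single_le_sum (f := fun j => (a j:ℤ) * x j)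
            (fun j _ => mul_nonneg (by linarith [hai j]) (hxl j)) (Finset.mem_univ i)
        have h2 : (S-1-c)*(S+1) ≤ (a i:ℤ) * x i := by
          have := hai i
          nlinarith [hxl i]
        -- y = sum + (S-1-c) ≥ (S-1-c)(S+2), contradiction with hyu
        nlinarith
      · push_neg at hhigh
        have hxlow : ∀ i, x i ≤ S - 2 - c := by
          intro i
          rcases hx0 i with h | h
          · exact h.2
          · exact absurd h.1 (not_le.mpr (hhigh i))
        have hsum : ∑ j, (a j:ℤ) * x j ≤ (S-2-c) * S := by
          calc ∑ j, (a j:ℤ) * x j ≤ ∑ j, (a j:ℤ) * (S-2-c) :=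
                Finset.sum_le_sum (fun j _ =>
                  mul_le_mul_of_nonneg_left (hxlow j) (by linarith [hai j]))
          _ = (S-2-c) * S := by rw [← Finset.sum_mul, ← hS]; ring
        -- y = sum + (S-1-c), so S-1-c ≤ y and y < (S-1-c)(S+1); contradiction with hy0
        rcases hy0 with h | h
        · linarith
        · nlinarith
    · -- y has colour 1, so all x i colour 1
      have hx1 : ∀ i, ¬ ((0 ≤ x i ∧ x i ≤ S - 2 - c) ∨
          ((S - 1 - c) * (S + 1) ≤ x i ∧ x i ≤ (S - 1 - c) * (S + 2) - 1)) := by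
        intro i hdisj
        have h := hcol i
        rw [(hΔ (x i)).mpr hdisj] at h
        exact hy0 ((hΔ y).mp h.symm)
      have hxge : ∀ i, S - 1 - c ≤ x i := by
        intro i
        have := hx1 i
        push_neg at this
        have := this.1 (hxl i)
        linarith
      have hyb : y ≤ (S-1-c)*(S+1) - 1 := by
        push_neg at hy0
        have := hy0.2
        by_contra hcon
        push_neg at hcon
        exact absurd hyu (not_le.mpr (by linarith [this (by linarith)]))
      have hsum : (S-1-c) * S ≤ ∑ j, (a j:ℤ) * x j := by
        calc (S-1-c) * S = ∑ j, (a j:ℤ) * (S-1-c) := by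
              rw [← Finset.sum_mul, ← hS]; ring
        _ ≤ ∑ j, (a j:ℤ) * x j :=
              Finset.sum_le_sum (fun j _ =>
                mul_le_mul_of_nonneg_left (hxge j) (by linarith [hai j]))
      nlinarith
  refine ⟨hmain, ?_⟩
  intro R hR
  by_contra hcon
  push_neg at hcon
  have hRle : (R:ℤ) ≤ (S - 1 - c) * (S + 2) := by linarith
  obtain ⟨x, y, hx, hy, heq, hcol⟩ := hR.1 (fun z => Δ₇ S c (z - 1))
  apply hmain
  refine ⟨fun i => x i - 1, y - 1, ?_, ?_, ?_, ?_⟩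
  · intro i
    have h := Finset.mem_Icc.mp (hx i)
    simp only [Finset.mem_Icc]
    exact ⟨by linarith [h.1], by linarith [h.2, hRle]⟩
  · have h := Finset.mem_Icc.mp hy
    simp only [Finset.mem_Icc]
    exact ⟨by linarith [h.1], by linarith [h.2, hRle]⟩
  · have hsub : ∑ i, (a i:ℤ) * (x i - 1) = (∑ i, (a i:ℤ) * x i) - S := by
      rw [hS, ← Finset.sum_sub_distrib]
      exact Finset.sum_congr rfl (fun i _ => by ring)
    rw [hsub]
    linarith
  · exact fun i => hcol i
end

section
/- Let a_1,...,a_{m-1} be a 2-distributable multiset of positive integers with sum S (S even). Then every 2-colouring of {0,1,...,S+2} admits a monochromatic solution to a_1 x_1 + ... + a_{m-1} x_{m-1} + 1 = x_m; equivalently, Rad_2(a_1,...,a_{m-1},−1; S−2) ≤ S + 3. -/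
lemma fin2_ne (x : Fin 2) (h : x ≠ 0) : x = 1 := by fin_cases x <;> simp_all

lemma fin2_trans (x y z : Fin 2) (h1 : x ≠ y) (h2 : z ≠ y) : x = z := by
  fin_cases x <;> fin_cases y <;> fin_cases z <;> simp_all

lemma sum_split {k : ℕ} (a : Fin k → ℕ) (f : Fin k → Fin 2) (u v : ℤ) :
    ∑ i, (a i : ℤ) * (if f i = 0 then u else v)
      = u * (∑ i ∈ Finset.univ.filter (fun i => f i = 0), (a i : ℤ))
      + v * (∑ i ∈ Finset.univ.filter (fun i => f i = 1), (a i : ℤ)) := by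
  rw [← Finset.sum_filter_add_sum_filter_not Finset.univ (fun i => f i = 0)]
  have h : Finset.univ.filter (fun i => ¬ f i = 0) = Finset.univ.filter (fun i => f i = 1) := by
    apply Finset.filter_congr
    intro i _
    constructor
    · intro h; exact fin2_ne _ h
    · intro h; simp [h]
  rw [h, Finset.mul_sum, Finset.mul_sum]
  congr 1
  · apply Finset.sum_congr rfl; intro i hi
    simp only [Finset.mem_filter] at hi
    rw [if_pos hi.2]; ring
  · apply Finset.sum_congr rfl; intro i hi
    simp only [Finset.mem_filter] at hi
    rw [if_neg (by simp [hi.2]), ]; ring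

lemma construct {k : ℕ} (a : Fin k → ℕ) (hdist : TDistributable a 2)
    (S : ℕ) (hS : S = ∑ i, a i) (χ : ℤ → Fin 2) (u v : ℤ) (σ₁ σ₂ : ℕ)
    (hσ : σ₁ + σ₂ = S) (N : ℤ)
    (hu : u ∈ Finset.Icc 0 N) (hv : v ∈ Finset.Icc 0 N) (y : ℤ)
    (hy : y = u * σ₁ + v * σ₂ + 1) (hyN : y ∈ Finset.Icc 0 N)
    (hcu : χ u = χ y) (hcv : χ v = χ y) :
    ∃ (x : Fin k → ℤ) (y' : ℤ),
      (∀ i, x i ∈ Finset.Icc (0 : ℤ) N) ∧ y' ∈ Finset.Icc (0 : ℤ) N ∧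
      ((∑ i, (a i : ℤ) * x i) + 1 = y') ∧ (∀ i, χ (x i) = χ y') := by
  obtain ⟨f, hf⟩ := hdist ![σ₁, σ₂] (by rw [Fin.sum_univ_two]; simpa using hσ.trans hS)
  refine ⟨fun i => if f i = 0 then u else v, y, ?_, hyN, ?_, ?_⟩
  · intro i; dsimp only; split <;> assumption
  · rw [sum_split]
    have h0 := hf 0
    have h1 := hf 1
    simp only [Matrix.cons_val_zero, Matrix.cons_val_one, Matrix.head_cons] at h0 h1
    rw [show (∑ i ∈ Finset.univ.filter (fun i => f i = 0), (a i : ℤ)) = ((σ₁ : ℕ) : ℤ) by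
      rw [← h0]; push_cast; rfl]
    rw [show (∑ i ∈ Finset.univ.filter (fun i => f i = 1), (a i : ℤ)) = ((σ₂ : ℕ) : ℤ) by
      rw [← h1]; push_cast; rfl]
    omega
  · intro i; dsimp only; split
    · exact hcu
    · exact hcv


lemma part1 (k : ℕ) (hk : 0 < k) (a : Fin k → ℕ) (hpos : ∀ i, 0 < a i)
    (hdist : TDistributable a 2) (S : ℕ) (hS : S = ∑ i, a i) (hSe : Even S) :
    (∀ χ : ℤ → Fin 2, ∃ (x : Fin k → ℤ) (y : ℤ),
        (∀ i, x i ∈ Finset.Icc (0 : ℤ) ((S : ℤ) + 2)) ∧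
        y ∈ Finset.Icc (0 : ℤ) ((S : ℤ) + 2) ∧
        ((∑ i, (a i : ℤ) * x i) + 1 = y) ∧ (∀ i, χ (x i) = χ y)) := by
  have hS1 : 1 ≤ S := by
    rw [hS]
    calc 1 ≤ a ⟨0, hk⟩ := hpos _
    _ ≤ ∑ i, a i := Finset.single_le_sum (fun i _ => Nat.zero_le _) (Finset.mem_univ _)
  intro χ
  have mem : ∀ z : ℤ, 0 ≤ z → z ≤ (S:ℤ) + 2 → z ∈ Finset.Icc (0:ℤ) ((S:ℤ)+2) := by
    intro z h1 h2; simp [Finset.mem_Icc, h1, h2]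
  by_cases h1 : χ 1 = χ ((S:ℤ)+1)
  · exact construct a hdist S hS χ 1 1 S 0 (by omega) _ (mem 1 (by omega) (by omega))
      (mem 1 (by omega) (by omega)) ((S:ℤ)+1) (by push_cast; ring)
      (mem _ (by omega) (by omega)) h1 h1
  by_cases h2 : χ 0 = χ 1
  · exact construct a hdist S hS χ 0 0 S 0 (by omega) _ (mem 0 (by omega) (by omega))
      (mem 0 (by omega) (by omega)) 1 (by push_cast; ring)
      (mem _ (by omega) (by omega)) h2 h2
  -- now χ 0 = χ (S+1), both ≠ χ 1
  have h0S : χ 0 = χ ((S:ℤ)+1) := fin2_trans _ _ _ h2 (fun h => h1 h.symm)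
  by_cases h3 : χ ((S:ℤ)+2) = χ 0
  · -- x ∈ {0, S+1}, σ₂ = 1, y = S+2
    refine construct a hdist S hS χ 0 ((S:ℤ)+1) (S-1) 1 (by omega) _
      (mem 0 (by omega) (by omega)) (mem _ (by omega) (by omega)) ((S:ℤ)+2)
      (by push_cast; ring) (mem _ (by omega) (by omega)) h3.symm ?_
    rw [← h0S, h3]
  by_cases h4 : χ 2 = χ 1
  · -- x ∈ {1,2}, σ₂ = 1, y = S+2 ; χ(S+2) = χ 1 since χ(S+2) ≠ χ 0
    have h5 : χ ((S:ℤ)+2) = χ 1 := fin2_trans _ _ _ h3 (fun h => h2 h.symm)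
    refine construct a hdist S hS χ 1 2 (S-1) 1 (by omega) _
      (mem 1 (by omega) (by omega)) (mem 2 (by omega) (by omega)) ((S:ℤ)+2)
      (by push_cast; omega) (mem _ (by omega) (by omega)) h5.symm (h4.trans h5.symm)
  · -- χ 2 = χ 0 : x ∈ {0,2}, σ₂ = S/2, y = S+1
    have h6 : χ 2 = χ 0 := fin2_trans _ _ _ h4 h2
    obtain ⟨m, hm⟩ := hSe
    refine construct a hdist S hS χ 0 2 m m (by omega) _
      (mem 0 (by omega) (by omega)) (mem 2 (by omega) (by omega)) ((S:ℤ)+1)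
      (by push_cast; omega) (mem _ (by omega) (by omega)) (h0S) (h6.trans h0S)

theorem rado_upper_S_minus_two (k : ℕ) (hk : 0 < k) (a : Fin k → ℕ) (hpos : ∀ i, 0 < a i)
    (hdist : TDistributable a 2) (S : ℕ) (hS : S = ∑ i, a i) (hSe : Even S) :
    (∀ χ : ℤ → Fin 2, ∃ (x : Fin k → ℤ) (y : ℤ),
        (∀ i, x i ∈ Finset.Icc (0 : ℤ) ((S : ℤ) + 2)) ∧
        y ∈ Finset.Icc (0 : ℤ) ((S : ℤ) + 2) ∧
        ((∑ i, (a i : ℤ) * x i) + 1 = y) ∧ (∀ i, χ (x i) = χ y)) ∧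
    (∀ χ : ℤ → Fin 2, MonoSoln a ((S : ℤ) - 2) 2 (S + 3) χ) := by
  refine ⟨part1 k hk a hpos hdist S hS hSe, ?_⟩
  intro χ
  obtain ⟨x, y, hx, hy, heq, hcol⟩ := part1 k hk a hpos hdist S hS hSe (fun n => χ (n + 1))
  simp only [Finset.mem_Icc] at hx hy
  have hsum : (∑ i, (a i : ℤ)) = (S : ℤ) := by rw [hS]; push_cast; rfl
  refine ⟨fun i => x i + 1, y + 1, ?_, ?_, ?_, fun i => hcol i⟩
  · intro i; simp only [Finset.mem_Icc]
    have := hx i; push_cast; omega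
  · simp only [Finset.mem_Icc]; push_cast; omega
  · have : ∑ i, (a i : ℤ) * (x i + 1) = (∑ i, (a i : ℤ) * x i) + ∑ i, (a i : ℤ) := by
      rw [← Finset.sum_add_distrib]; congr 1; ext i; ring
    rw [this, hsum]; omega
end

section
/- Let a_1,...,a_{m-1} be a 2-distributable multiset of positive integers with even sum S. Then Rad_2(a_1,...,a_{m-1},−1; 2S−1) = 3: every 2-colouring of {1,2,3} admits a monochromatic solution to a_1 x_1 + ... + a_{m-1} x_{m-1} − x_m = 2S−1, while the colouring of {1,2} with χ(1) ≠ χ(2) admits none. -/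
lemma fin2_third : ∀ x y z : Fin 2, x ≠ y → x ≠ z → y = z := by decide

lemma mono_of {k : ℕ} (a : Fin k → ℕ) (hdist : TDistributable a 2) (S : ℕ)
    (hS : S = ∑ i, a i) (N : ℕ) (χ : ℤ → Fin 2)
    (u v y : ℤ) (hu : u ∈ Finset.Icc (1:ℤ) N) (hv : v ∈ Finset.Icc (1:ℤ) N)
    (hy : y ∈ Finset.Icc (1:ℤ) N)
    (σ1 σ2 : ℕ) (hσ : σ1 + σ2 = S)
    (heq : (σ1:ℤ) * u + (σ2:ℤ) * v - y = 2 * (S:ℤ) - 1)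
    (hcu : χ u = χ y) (hcv : χ v = χ y) :
    MonoSoln a (2 * (S:ℤ) - 1) 2 N χ := by
  obtain ⟨f, hf⟩ := hdist ![σ1, σ2] (by simp [Fin.sum_univ_two, hσ, hS])
  refine ⟨fun i => if f i = 0 then u else v, y,
    fun i => by dsimp only; split <;> assumption, hy, ?_,
    fun i => by dsimp only; split <;> assumption⟩
  have h0 := hf 0
  have h1 := hf 1
  simp only [Matrix.cons_val_zero, Matrix.cons_val_one, Matrix.head_cons] at h0 h1
  have hsplit : ∑ i, (a i : ℤ) * (if f i = 0 then u else v)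
      = (∑ i ∈ Finset.univ.filter (fun i => f i = 0), (a i:ℤ)) * u
        + (∑ i ∈ Finset.univ.filter (fun i => f i = 1), (a i:ℤ)) * v := by
    rw [← Finset.sum_filter_add_sum_filter_not Finset.univ (fun i => f i = 0)]
    congr 1
    · rw [Finset.sum_mul]
      refine Finset.sum_congr rfl fun i hi => ?_
      simp only [Finset.mem_filter] at hi
      simp [hi.2]
    · rw [Finset.sum_mul]
      refine Finset.sum_congr ?_ fun i hi => ?_
      · refine Finset.filter_congr fun i _ => ?_
        constructor
        · intro h; omega
        · intro h; simp [h]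
      · simp only [Finset.mem_filter] at hi
        have : f i ≠ 0 := by omega
        simp [this]
  rw [hsplit]
  have c0 : (∑ i ∈ Finset.univ.filter (fun i => f i = 0), (a i:ℤ)) = (σ1:ℤ) := by
    rw [← Nat.cast_sum, h0]
  have c1 : (∑ i ∈ Finset.univ.filter (fun i => f i = 1), (a i:ℤ)) = (σ2:ℤ) := by
    rw [← Nat.cast_sum, h1]
  rw [c0, c1]; linarith

theorem rado_two_S_minus_one (k : ℕ) (hk : 0 < k) (a : Fin k → ℕ) (hpos : ∀ i, 0 < a i)
    (hdist : TDistributable a 2) (S : ℕ) (hS : S = ∑ i, a i) (hSe : Even S) :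
    (∀ χ : ℤ → Fin 2, MonoSoln a (2 * (S : ℤ) - 1) 2 3 χ) ∧
    (∀ χ : ℤ → Fin 2, χ 1 ≠ χ 2 → ¬ MonoSoln a (2 * (S : ℤ) - 1) 2 2 χ) ∧
    IsRado a (2 * (S : ℤ) - 1) 2 3 := by
  have hS1 : 1 ≤ S := by
    rw [hS]
    calc 1 ≤ a ⟨0, hk⟩ := hpos _
    _ ≤ ∑ i, a i := Finset.single_le_sum (fun i _ => Nat.zero_le _) (Finset.mem_univ _)
  have part1 : ∀ χ : ℤ → Fin 2, MonoSoln a (2 * (S : ℤ) - 1) 2 3 χ := by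
    intro χ
    by_cases h12 : χ 1 = χ 2
    · exact mono_of a hdist S hS 3 χ 2 2 1 (by decide) (by decide) (by decide)
        S 0 (by omega) (by push_cast; ring) h12.symm h12.symm
    · by_cases h13 : χ 1 = χ 3
      · obtain ⟨m, hm⟩ := hSe
        exact mono_of a hdist S hS 3 χ 1 3 1 (by decide) (by decide) (by decide)
          m m (by omega) (by subst hm; push_cast; ring) rfl h13.symm
      · have h23 : χ 2 = χ 3 := fin2_third _ _ _ h12 h13
        exact mono_of a hdist S hS 3 χ 2 3 2 (by decide) (by decide) (by decide)
          (S - 1) 1 (by omega) (by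
            have : ((S - 1 : ℕ) : ℤ) = (S : ℤ) - 1 := by
              have := hS1; push_cast [Nat.cast_sub this]; ring
            rw [this]; push_cast; ring) rfl h23.symm
  have part2 : ∀ χ : ℤ → Fin 2, χ 1 ≠ χ 2 → ¬ MonoSoln a (2 * (S : ℤ) - 1) 2 2 χ := by
    intro χ hne ⟨x, y, hx, hy, heq, hc⟩
    simp only [Finset.mem_Icc] at hx hy
    have hy12 : y = 1 ∨ y = 2 := by omega
    have hxy : ∀ i, x i = y := by
      intro i
      have hxi := hx i
      have hci := hc i
      rcases hy12 with rfl | rfl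
      · by_contra h
        have : x i = 2 := by omega
        exact hne (this ▸ hci).symm
      · by_contra h
        have : x i = 1 := by omega
        exact hne (this ▸ hci)
    have hsum : ∑ i, (a i : ℤ) * x i = (S : ℤ) * y := by
      rw [hS]; push_cast
      rw [Finset.sum_mul]
      exact Finset.sum_congr rfl fun i _ => by rw [hxy i]
    rw [hsum] at heq
    rcases hy12 with rfl | rfl <;> omega
  refine ⟨part1, part2, ⟨part1, ?_⟩⟩
  intro N hN
  by_contra h
  push_neg at h
  have hN2 : N ≤ 2 := by omega
  set χ : ℤ → Fin 2 := fun n => if n = 1 then 0 else 1 with hχ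
  have hne : χ 1 ≠ χ 2 := by simp [hχ]
  obtain ⟨x, y, hx, hy, heq, hc⟩ := hN χ
  refine part2 χ hne ⟨x, y, fun i => ?_, ?_, heq, hc⟩
  · have := hx i; simp only [Finset.mem_Icc] at this ⊢; omega
  · have := hy; simp only [Finset.mem_Icc] at this ⊢; omega
end

section
/- Let a_1,...,a_{m-1} be a 2-distributable multiset of positive integers with sum S, and let c be an integer with S ≤ c ≤ 2S−3 and cS even. Then every 2-colouring of {0,1,...,S} admits a monochromatic solution to a_1 x_1 + ... + a_{m-1} x_{m-1} − x_m = c − (S−1); consequently Rad_2(a_1,...,a_{m-1},−1; c) ≤ S + 1. -/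
private lemma fin2_eq (x y z : Fin 2) (h1 : x ≠ z) (h2 : y ≠ z) : x = y := by
  fin_cases x <;> fin_cases y <;> fin_cases z <;> simp_all

/-- Using 2-distributability, realize the value `σ·u + (S-σ)·v` with all variables `u` or `v`. -/
lemma rado_key {k : ℕ} (a : Fin k → ℕ) (hdist : TDistributable a 2) (S : ℕ) (hS : S = ∑ i, a i)
    (σ : ℕ) (hσ : σ ≤ S) (u v : ℤ) :
    ∃ x : Fin k → ℤ, (∀ i, x i = u ∨ x i = v) ∧
      ∑ i, (a i : ℤ) * x i = (σ : ℤ) * u + ((S : ℤ) - σ) * v := by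
  obtain ⟨f, hf⟩ := hdist ![σ, S - σ] (by simp [← hS]; omega)
  refine ⟨fun i => if f i = 0 then u else v, fun i => by dsimp only; split <;> tauto, ?_⟩
  have h0 := hf 0
  have h1 := hf 1
  simp only [Matrix.cons_val_zero, Matrix.cons_val_one, Matrix.head_cons] at h0 h1
  have step : ∀ i ∈ Finset.univ, (a i : ℤ) * (if f i = 0 then u else v)
      = (if f i = 0 then (a i : ℤ) * u else (a i : ℤ) * v) := fun i _ => by split <;> rfl
  rw [Finset.sum_congr rfl step, Finset.sum_ite]
  have hfilt : Finset.univ.filter (fun i => ¬ f i = 0) = Finset.univ.filter (fun i => f i = 1) := by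
    apply Finset.filter_congr
    intro i _
    constructor
    · intro h; omega
    · intro h; omega
  rw [hfilt, ← Finset.sum_mul, ← Finset.sum_mul, ← Nat.cast_sum, ← Nat.cast_sum, h0, h1]
  have : ((S - σ : ℕ) : ℤ) = (S : ℤ) - σ := by omega
  rw [this]

/-- From a realization datum `(σ, u, v, y)` produce a monochromatic solution. -/
lemma rado_build {k : ℕ} (a : Fin k → ℕ) (hdist : TDistributable a 2) (S : ℕ)
    (hS : S = ∑ i, a i) (c : ℤ) (χ : ℤ → Fin 2) (σ : ℕ) (hσ : σ ≤ S) (u v y : ℤ)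
    (hu0 : 0 ≤ u) (hu1 : u ≤ S) (hv0 : 0 ≤ v) (hv1 : v ≤ S) (hy0 : 0 ≤ y) (hy1 : y ≤ S)
    (heq : (σ : ℤ) * u + ((S : ℤ) - σ) * v - y = c - ((S : ℤ) - 1))
    (hχu : χ u = χ y) (hχv : χ v = χ y) :
    ∃ (x : Fin k → ℤ) (y : ℤ),
        (∀ i, x i ∈ Finset.Icc (0 : ℤ) (S : ℤ)) ∧ y ∈ Finset.Icc (0 : ℤ) (S : ℤ) ∧
        ((∑ i, (a i : ℤ) * x i) - y = c - ((S : ℤ) - 1)) ∧ (∀ i, χ (x i) = χ y) := by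
  obtain ⟨x, hx, hsum⟩ := rado_key a hdist S hS σ hσ u v
  refine ⟨x, y, ?_, Finset.mem_Icc.mpr ⟨hy0, hy1⟩, by rw [hsum]; linarith, ?_⟩
  · intro i
    rcases hx i with h | h <;> rw [h] <;> exact Finset.mem_Icc.mpr (by constructor <;> assumption)
  · intro i
    rcases hx i with h | h <;> rw [h] <;> assumption

theorem rado_upper_mid (k : ℕ) (hk : 0 < k) (a : Fin k → ℕ) (hpos : ∀ i, 0 < a i)
    (hdist : TDistributable a 2) (S : ℕ) (hS : S = ∑ i, a i) (c : ℤ)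
    (hc1 : (S : ℤ) ≤ c) (hc2 : c ≤ 2 * (S : ℤ) - 3) (he : Even (c * S)) :
    (∀ χ : ℤ → Fin 2, ∃ (x : Fin k → ℤ) (y : ℤ),
        (∀ i, x i ∈ Finset.Icc (0 : ℤ) (S : ℤ)) ∧ y ∈ Finset.Icc (0 : ℤ) (S : ℤ) ∧
        ((∑ i, (a i : ℤ) * x i) - y = c - ((S : ℤ) - 1)) ∧ (∀ i, χ (x i) = χ y)) ∧
    (∀ χ : ℤ → Fin 2, MonoSoln a c 2 (S + 1) χ) := by
  -- d = c - (S-1), the shifted constant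
  obtain ⟨d, hd⟩ : ∃ n : ℕ, (n : ℤ) = c - S + 1 :=
    ⟨(c - S + 1).toNat, Int.toNat_of_nonneg (by linarith)⟩
  have hd1 : 1 ≤ d := by omega
  have hd2 : (d : ℤ) ≤ (S : ℤ) - 2 := by omega
  have hdS : d + 2 ≤ S := by omega
  have hS3 : 3 ≤ S := by omega
  -- parity: d * S is even
  have hpar : Even (d * S) := by
    have h1 : Even ((S : ℤ) * ((S : ℤ) - 1)) := Int.even_mul_pred_self S
    have h2 : Even ((d : ℤ) * (S : ℤ)) := by
      have : (d : ℤ) * (S : ℤ) = c * S - (S : ℤ) * ((S : ℤ) - 1) := by rw [hd]; ring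
      rw [this]
      exact he.sub h1
    have := h2
    rw [← Nat.cast_mul, Int.even_coe_nat] at this
    exact this
  have hmain : ∀ χ : ℤ → Fin 2, ∃ (x : Fin k → ℤ) (y : ℤ),
      (∀ i, x i ∈ Finset.Icc (0 : ℤ) (S : ℤ)) ∧ y ∈ Finset.Icc (0 : ℤ) (S : ℤ) ∧
      ((∑ i, (a i : ℤ) * x i) - y = c - ((S : ℤ) - 1)) ∧ (∀ i, χ (x i) = χ y) := by
    intro χ
    by_cases h1 : χ 1 = χ 0
    · -- case 1: σ = d, (u,v,y) = (1,0,0)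
      exact rado_build a hdist S hS c χ d (by omega) 1 0 0
        (by norm_num) (by exact_mod_cast by omega) le_rfl (by exact_mod_cast Nat.zero_le S)
        le_rfl (by exact_mod_cast Nat.zero_le S) (by push_cast; linarith) h1 rfl
    by_cases h2 : χ ((S : ℤ) - d) = χ 1
    · -- case 2: σ = 0, (u,v,y) = (1,1,S-d)
      exact rado_build a hdist S hS c χ 0 (Nat.zero_le S) 1 1 ((S : ℤ) - d)
        (by norm_num) (by exact_mod_cast by omega) (by norm_num) (by exact_mod_cast by omega)
        (by omega) (by omega) (by push_cast; linarith) h2.symm h2.symm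
    -- now χ (S-d) = χ 0 ≠ χ 1
    have hA : χ ((S : ℤ) - d) = χ 0 := fin2_eq _ _ _ h2 (Ne.symm h1)
    by_cases h3 : χ (S : ℤ) = χ 0
    · -- case 3: σ = S-1, (u,v,y) = (0,S,S-d)
      refine rado_build a hdist S hS c χ (S - 1) (by omega) 0 (S : ℤ) ((S : ℤ) - d)
        le_rfl (by exact_mod_cast Nat.zero_le S) (by exact_mod_cast Nat.zero_le S) le_rfl
        (by omega) (by omega) ?_ hA.symm (h3.trans hA.symm)
      have : ((S - 1 : ℕ) : ℤ) = (S : ℤ) - 1 := by omega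
      rw [this]; push_cast; ring_nf; linarith
    have hB : χ (S : ℤ) = χ 1 := fin2_eq _ _ _ h3 h1
    by_cases h4 : χ 2 = χ 1
    · -- case 4: σ = S-d, (u,v,y) = (1,2,S)
      refine rado_build a hdist S hS c χ (S - d) (by omega) 1 2 (S : ℤ)
        (by norm_num) (by exact_mod_cast by omega) (by norm_num) (by exact_mod_cast by omega)
        (by exact_mod_cast Nat.zero_le S) le_rfl ?_ hB.symm ?_
      · have : ((S - d : ℕ) : ℤ) = (S : ℤ) - d := by omega
        rw [this]; push_cast; linarith
      · exact h4.trans hB.symm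
    have hC : χ 2 = χ 0 := fin2_eq _ _ _ h4 (Ne.symm h1)
    rcases Nat.even_mul.mp hpar with hdev | hSev
    · -- case 5: d even, σ = S - d/2, (u,v,y) = (0,2,0)
      obtain ⟨e, hedef⟩ := hdev
      refine rado_build a hdist S hS c χ (S - e) (by omega) 0 2 0
        le_rfl (by exact_mod_cast Nat.zero_le S) (by norm_num) (by exact_mod_cast by omega)
        le_rfl (by exact_mod_cast Nat.zero_le S) ?_ rfl hC
      have h5 : ((S - e : ℕ) : ℤ) = (S : ℤ) - e := by omega
      have h6 : (d : ℤ) = e + e := by exact_mod_cast hedef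
      rw [h5]; push_cast; linarith
    · -- case 6: S even, σ = S/2, (u,v,y) = (0,2,S-d)
      obtain ⟨t, htdef⟩ := hSev
      refine rado_build a hdist S hS c χ t (by omega) 0 2 ((S : ℤ) - d)
        le_rfl (by exact_mod_cast Nat.zero_le S) (by norm_num) (by exact_mod_cast by omega)
        (by omega) (by omega) ?_ hA.symm (hC.trans hA.symm)
      have h6 : (S : ℤ) = t + t := by exact_mod_cast htdef
      push_cast; linarith
  refine ⟨hmain, fun χ => ?_⟩
  obtain ⟨x, y, hx, hy, heq, hχ⟩ := hmain (fun n => χ (n + 1))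
  refine ⟨fun i => x i + 1, y + 1, ?_, ?_, ?_, fun i => hχ i⟩
  · intro i
    have := Finset.mem_Icc.mp (hx i)
    simp only [Finset.mem_Icc]
    push_cast
    omega
  · have := Finset.mem_Icc.mp hy
    refine Finset.mem_Icc.mpr ⟨by omega, by push_cast; omega⟩
  · have hsum : ∑ i, (a i : ℤ) * (x i + 1) = (∑ i, (a i : ℤ) * x i) + S := by
      rw [hS]; push_cast
      rw [← Finset.sum_add_distrib]
      congr 1; ext i; ring
    rw [hsum]; linarith
end

section
/- Let a_1,...,a_{m-1} be positive integers with sum S, and let λ be an integer with 3 ≤ λ ≤ S. Then Rad_r(a_1,...,a_{m-1},−1; λ(S−1)) = λ for every r ≥ 2. -/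
theorem rado_lambda_S_minus_one (k : ℕ) (hk : 0 < k) (a : Fin k → ℕ) (hpos : ∀ i, 0 < a i)
    (S : ℕ) (hS : S = ∑ i, a i) (lam : ℕ) (hlam1 : 3 ≤ lam) (hlam2 : lam ≤ S)
    (r : ℕ) (hr : 2 ≤ r) :
    IsRado a ((lam : ℤ) * ((S : ℤ) - 1)) r lam := by
  have hSsum : (S : ℤ) = ∑ i, (a i : ℤ) := by rw [hS]; push_cast; ring
  constructor
  · intro χ
    refine ⟨fun _ => (lam : ℤ), (lam : ℤ), fun i => ?_, ?_, ?_, fun _ => rfl⟩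
    · simp [Finset.mem_Icc]; omega
    · simp [Finset.mem_Icc]; omega
    · have : ∑ i, (a i : ℤ) * (lam : ℤ) = (∑ i, (a i : ℤ)) * lam := by
        rw [Finset.sum_mul]
      rw [this, ← hSsum]; ring
  · intro N hN
    by_contra h
    push_neg at h
    obtain ⟨x, y, hx, hy, heq, -⟩ := hN (fun _ => ⟨0, by omega⟩)
    have hub : ∑ i, (a i : ℤ) * x i ≤ ∑ i, (a i : ℤ) * N := by
      apply Finset.sum_le_sum
      intro i _
      have := (Finset.mem_Icc.mp (hx i)).2
      exact mul_le_mul_of_nonneg_left this (by positivity)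
    have h2 : ∑ i, (a i : ℤ) * N = (S : ℤ) * N := by
      rw [← Finset.sum_mul, ← hSsum]
    have hy1 := (Finset.mem_Icc.mp hy).1
    have hSN : (S : ℤ) * N ≤ (S : ℤ) * (lam - 1) := by
      apply mul_le_mul_of_nonneg_left _ (by positivity)
      omega
    have : (lam : ℤ) * ((S : ℤ) - 1) ≤ (S : ℤ) * (lam - 1) - 1 := by omega
    have hlam2' : (lam : ℤ) ≤ S := by exact_mod_cast hlam2
    nlinarith
end

section
/- Let a_1,...,a_{m-1} be a 3-distributable multiset of positive integers with sum S, and let c = λ(S−1) − μ with 3 ≤ λ ≤ S, 2 ≤ μ ≤ S − λ, and cS even. Then Rad_2(a_1,...,a_{m-1},−1; c) = λ + μ. -/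
/-- From a "certificate" using at most 3 distinct values, build a monochromatic solution. -/
lemma cert_soln {k : ℕ} (a : Fin k → ℕ) (hpos : ∀ i, 0 < a i)
    (hdist : TDistributable a 3) (S : ℕ) (hS : S = ∑ i, a i)
    (c : ℤ) (N : ℕ) (χ : ℤ → Fin 2)
    (v s : Fin 3 → ℕ) (w : ℕ)
    (hsum : s 0 + s 1 + s 2 = S)
    (hv1 : ∀ j, 1 ≤ v j) (hvN : ∀ j, v j ≤ N)
    (hw1 : 1 ≤ w) (hwN : w ≤ N)
    (heq : ((s 0 * v 0 + s 1 * v 1 + s 2 * v 2 : ℕ) : ℤ) = c + (w : ℤ))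
    (hcol : ∀ j, s j ≠ 0 → χ ((v j : ℕ) : ℤ) = χ ((w : ℕ) : ℤ)) :
    MonoSoln a c 2 N χ := by
  obtain ⟨f, hf⟩ := hdist s (by rw [Fin.sum_univ_three, hsum, hS])
  refine ⟨fun i => ((v (f i) : ℕ) : ℤ), ((w : ℕ) : ℤ), ?_, ?_, ?_, ?_⟩
  · intro i
    simp only [Finset.mem_Icc]
    constructor
    · exact_mod_cast hv1 (f i)
    · exact_mod_cast hvN (f i)
  · simp only [Finset.mem_Icc]
    exact ⟨by exact_mod_cast hw1, by exact_mod_cast hwN⟩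
  · have key : ∑ i, a i * v (f i) = s 0 * v 0 + s 1 * v 1 + s 2 * v 2 := by
      have h1 : ∑ i, a i * v (f i)
          = ∑ j : Fin 3, ∑ i ∈ Finset.univ.filter (fun i => f i = j), a i * v (f i) :=
        (Finset.sum_fiberwise Finset.univ f (fun i => a i * v (f i))).symm
      have h2 : ∀ j : Fin 3,
          ∑ i ∈ Finset.univ.filter (fun i => f i = j), a i * v (f i) = s j * v j := by
        intro j
        have : ∑ i ∈ Finset.univ.filter (fun i => f i = j), a i * v (f i)
            = ∑ i ∈ Finset.univ.filter (fun i => f i = j), a i * v j := by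
          apply Finset.sum_congr rfl
          intro i hi
          simp only [Finset.mem_filter] at hi
          rw [hi.2]
        rw [this, ← Finset.sum_mul, hf j]
      rw [h1, Fin.sum_univ_three] at *
      rw [h2 0, h2 1, h2 2]
    have : (∑ i, (a i : ℤ) * ((v (f i) : ℕ) : ℤ)) = ((∑ i, a i * v (f i) : ℕ) : ℤ) := by
      push_cast; rfl
    rw [this, key, heq]; ring
  · intro i
    apply hcol (f i)
    intro hz
    have h0 : a i ≤ ∑ i' ∈ Finset.univ.filter (fun i' => f i' = f i), a i' := by
      apply Finset.single_le_sum (fun _ _ => Nat.zero_le _)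
      simp
    rw [hf (f i), hz] at h0
    have := hpos i
    omega

lemma fin2_eq_of_ne {x y z : Fin 2} (h1 : x ≠ z) (h2 : y ≠ z) : x = y := by
  fin_cases x <;> fin_cases y <;> fin_cases z <;> simp_all

theorem rado_lambda_mu_exact (k : ℕ) (hk : 0 < k) (a : Fin k → ℕ) (hpos : ∀ i, 0 < a i)
    (hdist : TDistributable a 3) (S : ℕ) (hS : S = ∑ i, a i)
    (lam mu : ℕ) (hlam1 : 3 ≤ lam) (hlam2 : lam ≤ S) (hmu1 : 2 ≤ mu) (hmu2 : mu ≤ S - lam)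
    (c : ℤ) (hc : c = (lam : ℤ) * ((S : ℤ) - 1) - mu) (he : Even (c * S)) :
    IsRado a c 2 (lam + mu) := by
  have hNS : lam + mu ≤ S := by omega
  constructor
  · -- λ + μ is in the set : every colouring admits a monochromatic solution
    intro χ
    set N := lam + mu with hN
    -- abbreviation for applying the certificate lemma
    have cert := fun (v s : Fin 3 → ℕ) (w : ℕ) h1 h2 h3 h4 h5 h6 h7 =>
      cert_soln a hpos hdist S hS c N χ v s w h1 h2 h3 h4 h5 h6 h7
    by_cases e1 : χ ((lam - 1 : ℕ) : ℤ) = χ ((lam : ℕ) : ℤ)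
    · -- C1 : values λ-1 (×μ), λ (×(S-μ)), w = λ
      apply cert ![lam - 1, lam, lam] ![mu, S - mu, 0] lam
      · simp; omega
      · intro j; fin_cases j <;> simp <;> omega
      · intro j; fin_cases j <;> simp <;> omega
      · omega
      · omega
      · simp only [Matrix.cons_val_zero, Matrix.cons_val_one, Matrix.cons_val_two, Matrix.tail_cons, Matrix.head_cons]
        have h1 : ((lam - 1 : ℕ) : ℤ) = (lam : ℤ) - 1 := by omega
        have h2 : ((S - mu : ℕ) : ℤ) = (S : ℤ) - mu := by omega
        push_cast [h1, h2, hc]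
        ring
      · intro j _
        fin_cases j <;> simp only [Matrix.cons_val_zero, Matrix.cons_val_one, Matrix.cons_val_two, Matrix.tail_cons, Matrix.head_cons]
        · exact e1
        · rfl
        · rfl
    · by_cases e2 : χ ((lam + mu : ℕ) : ℤ) = χ ((lam : ℕ) : ℤ)
      · -- C2 : values λ (×S), w = λ+μ
        apply cert ![lam, lam, lam] ![S, 0, 0] (lam + mu)
        · simp
        · intro j; fin_cases j <;> simp <;> omega
        · intro j; fin_cases j <;> simp <;> omega
        · omega
        · omega
        · simp only [Matrix.cons_val_zero, Matrix.cons_val_one, Matrix.cons_val_two, Matrix.tail_cons, Matrix.head_cons]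
          push_cast [hc]; ring
        · intro j _
          fin_cases j <;> simp only [Matrix.cons_val_zero, Matrix.cons_val_one, Matrix.cons_val_two, Matrix.tail_cons, Matrix.head_cons] <;> exact e2.symm
      · -- now χ(λ-1) = χ(λ+μ) ≠ χ(λ)
        have e12 : χ ((lam - 1 : ℕ) : ℤ) = χ ((lam + mu : ℕ) : ℤ) := fin2_eq_of_ne e1 e2
        by_cases e3 : χ ((lam - 2 : ℕ) : ℤ) = χ ((lam : ℕ) : ℤ)
        · -- χ(λ-2) = χ(λ)
          rcases Nat.even_or_odd mu with hmev | hmodd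
          · -- C5 : μ even : values λ-2 (×μ/2), λ (×(S-μ/2)), w = λ
            obtain ⟨m, hm⟩ := hmev
            apply cert ![lam - 2, lam, lam] ![m, S - m, 0] lam
            · simp; omega
            · intro j; fin_cases j <;> simp <;> omega
            · intro j; fin_cases j <;> simp <;> omega
            · omega
            · omega
            · simp only [Matrix.cons_val_zero, Matrix.cons_val_one, Matrix.cons_val_two, Matrix.tail_cons, Matrix.head_cons]
              have h1 : ((lam - 2 : ℕ) : ℤ) = (lam : ℤ) - 2 := by omega
              have h2 : ((S - m : ℕ) : ℤ) = (S : ℤ) - m := by omega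
              have h3 : (mu : ℤ) = 2 * m := by omega
              push_cast [h1, h2, hc]
              linear_combination (lam : ℤ) * 0 + h3
            · intro j _
              fin_cases j <;> simp only [Matrix.cons_val_zero, Matrix.cons_val_one, Matrix.cons_val_two, Matrix.tail_cons, Matrix.head_cons]
              · exact e3
              · rfl
              · rfl
          · -- μ odd, hence S even (from parity of cS)
            have hSev : Even S := by
              by_contra hSo
              have hSodd : Odd S := Nat.not_even_iff_odd.mp hSo
              have h1 : Odd (S : ℤ) := by exact_mod_cast hSodd
              have h2 : Even ((S : ℤ) - 1) := by
                rcases h1 with ⟨t, ht⟩; exact ⟨t, by omega⟩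
              have h3 : Even ((lam : ℤ) * ((S : ℤ) - 1)) := h2.mul_left _
              have h4 : Odd (mu : ℤ) := by exact_mod_cast hmodd
              have h5 : Odd c := by
                rw [hc]
                rcases h3 with ⟨t, ht⟩; rcases h4 with ⟨u, hu⟩
                exact ⟨t - u - 1, by omega⟩
              have h6 : Odd (c * S) := h5.mul h1
              exact (Int.not_odd_iff_even.mpr he) h6
            obtain ⟨p, hp⟩ := hSev
            obtain ⟨m, hm⟩ := hmodd
            by_cases e4 : χ ((lam + 1 : ℕ) : ℤ) = χ ((lam : ℕ) : ℤ)
            · -- C6 : values λ-2 (×(μ-1)/2), λ (×rest), w = λ+1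
              apply cert ![lam - 2, lam, lam] ![m, S - m, 0] (lam + 1)
              · simp; omega
              · intro j; fin_cases j <;> simp <;> omega
              · intro j; fin_cases j <;> simp <;> omega
              · omega
              · omega
              · simp only [Matrix.cons_val_zero, Matrix.cons_val_one, Matrix.cons_val_two, Matrix.tail_cons, Matrix.head_cons]
                have h1 : ((lam - 2 : ℕ) : ℤ) = (lam : ℤ) - 2 := by omega
                have h2 : ((S - m : ℕ) : ℤ) = (S : ℤ) - m := by omega
                have h3 : (mu : ℤ) = 2 * m + 1 := by omega
                push_cast [h1, h2, hc]
                linear_combination h3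
              · intro j _
                fin_cases j <;> simp only [Matrix.cons_val_zero, Matrix.cons_val_one, Matrix.cons_val_two, Matrix.tail_cons, Matrix.head_cons]
                · exact e3.trans e4.symm
                · exact e4.symm
                · exact e4.symm
            · -- C7 : values λ-1 (×S/2), λ+1 (×S/2), w = λ+μ
              have e14 : χ ((lam + 1 : ℕ) : ℤ) = χ ((lam + mu : ℕ) : ℤ) := fin2_eq_of_ne e4 e2
              apply cert ![lam - 1, lam + 1, lam] ![p, p, 0] (lam + mu)
              · simp; omega
              · intro j; fin_cases j <;> simp <;> omega
              · intro j; fin_cases j <;> simp <;> omega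
              · omega
              · omega
              · simp only [Matrix.cons_val_zero, Matrix.cons_val_one, Matrix.cons_val_two, Matrix.tail_cons, Matrix.head_cons]
                have h1 : ((lam - 1 : ℕ) : ℤ) = (lam : ℤ) - 1 := by omega
                have h2 : (S : ℤ) = 2 * p := by omega
                push_cast [h1, hc]
                linear_combination (-(lam : ℤ)) * h2
              · intro j hj
                fin_cases j <;> simp only [Matrix.cons_val_zero, Matrix.cons_val_one, Matrix.cons_val_two, Matrix.tail_cons, Matrix.head_cons]
                · exact e12
                · exact e14
                · simp at hj
        · -- χ(λ-2) = χ(λ-1) = χ(λ+μ) ≠ χ(λ)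
          have e32 : χ ((lam - 2 : ℕ) : ℤ) = χ ((lam + mu : ℕ) : ℤ) := fin2_eq_of_ne e3 e2
          set q := S / (mu + 1) with hq
          set r := S % (mu + 1) with hr
          have hqr : (mu + 1) * q + r = S := Nat.div_add_mod S (mu + 1)
          have hrlt : r < mu + 1 := Nat.mod_lt _ (by omega)
          have hq1 : 1 ≤ q := by
            rw [hq, Nat.le_div_iff_mul_le (by omega)]
            omega
          have hmuq : mu * 1 ≤ mu * q := Nat.mul_le_mul_left mu hq1
          have hqS : q + mu ≤ S := by
            have : (mu + 1) * q = mu * q + q := by ring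
            omega
          have hqr' : ((mu : ℤ) + 1) * q + r = S := by exact_mod_cast hqr
          by_cases hr0 : r = 0
          · -- C3 : values λ-1 (×(S-q)), λ+μ (×q), w = λ+μ
            apply cert ![lam - 1, lam + mu, lam] ![S - q, q, 0] (lam + mu)
            · simp; omega
            · intro j; fin_cases j <;> simp <;> omega
            · intro j; fin_cases j <;> simp <;> omega
            · omega
            · omega
            · simp only [Matrix.cons_val_zero, Matrix.cons_val_one, Matrix.cons_val_two, Matrix.tail_cons, Matrix.head_cons]
              have h1 : ((lam - 1 : ℕ) : ℤ) = (lam : ℤ) - 1 := by omega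
              have h2 : ((S - q : ℕ) : ℤ) = (S : ℤ) - q := by omega
              have h3 : (r : ℤ) = 0 := by exact_mod_cast hr0
              push_cast [h1, h2, hc]
              linear_combination hqr' - h3
            · intro j hj
              fin_cases j <;> simp only [Matrix.cons_val_zero, Matrix.cons_val_one, Matrix.cons_val_two, Matrix.tail_cons, Matrix.head_cons]
              · exact e12
              · rfl
              · simp at hj
          · -- C4 : values λ-2 (×(μ+1-r)), λ-1 (×(S-q-(μ+1-r))), λ+μ (×q), w = λ-1
            apply cert ![lam - 2, lam - 1, lam + mu] ![mu + 1 - r, S - q - (mu + 1 - r), q]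
              (lam - 1)
            · simp; omega
            · intro j; fin_cases j <;> simp <;> omega
            · intro j; fin_cases j <;> simp <;> omega
            · omega
            · omega
            · simp only [Matrix.cons_val_zero, Matrix.cons_val_one, Matrix.cons_val_two, Matrix.tail_cons, Matrix.head_cons]
              have h1 : ((lam - 2 : ℕ) : ℤ) = (lam : ℤ) - 2 := by omega
              have h2 : ((lam - 1 : ℕ) : ℤ) = (lam : ℤ) - 1 := by omega
              have h3 : ((mu + 1 - r : ℕ) : ℤ) = (mu : ℤ) + 1 - r := by omega
              have h4 : ((S - q - (mu + 1 - r) : ℕ) : ℤ) = (S : ℤ) - q - ((mu : ℤ) + 1 - r) := by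
                omega
              push_cast [h1, h2, h3, h4, hc]
              linear_combination hqr'
            · intro j hj
              fin_cases j <;> simp only [Matrix.cons_val_zero, Matrix.cons_val_one, Matrix.cons_val_two, Matrix.tail_cons, Matrix.head_cons]
              · exact e32.trans e12.symm
              · rfl
              · exact e12.symm
  · -- lower bound : any good N is at least λ + μ
    intro N hNmem
    by_contra hlt
    push_neg at hlt
    set χ : ℤ → Fin 2 := fun n => if n < (lam : ℤ) then 0 else 1 with hχ
    obtain ⟨x, y, hx, hy, heq, hcol⟩ := hNmem χ
    simp only [Finset.mem_Icc] at hx hy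
    by_cases hylt : y < (lam : ℤ)
    · -- all variables < λ
      have hxlt : ∀ i, x i ≤ (lam : ℤ) - 1 := by
        intro i
        have := hcol i
        rw [hχ] at this
        simp only [hylt, if_true] at this
        by_contra hge
        push_neg at hge
        rw [if_neg (by omega)] at this
        exact absurd this (by simp)
      have hsum : (∑ i, (a i : ℤ) * x i) ≤ ∑ i, (a i : ℤ) * ((lam : ℤ) - 1) := by
        apply Finset.sum_le_sum
        intro i _
        exact mul_le_mul_of_nonneg_left (hxlt i) (by positivity)
      have hS' : (∑ i, (a i : ℤ) * ((lam : ℤ) - 1)) = (S : ℤ) * ((lam : ℤ) - 1) := by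
        rw [← Finset.sum_mul, hS]; push_cast; ring
      have h1 : c ≤ (S : ℤ) * ((lam : ℤ) - 1) - 1 := by
        rw [← heq]; rw [hS'] at hsum; linarith [hy.1]
      rw [hc] at h1
      nlinarith [hNS, hlam2, hmu1]
    · -- all variables ≥ λ
      have hxge : ∀ i, (lam : ℤ) ≤ x i := by
        intro i
        have := hcol i
        rw [hχ] at this
        simp only [hylt, if_false] at this
        by_contra hge
        push_neg at hge
        rw [if_pos (by omega)] at this
        exact absurd this (by simp)
      have hsum : (∑ i, (a i : ℤ) * (lam : ℤ)) ≤ ∑ i, (a i : ℤ) * x i := by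
        apply Finset.sum_le_sum
        intro i _
        exact mul_le_mul_of_nonneg_left (hxge i) (by positivity)
      have hS' : (∑ i, (a i : ℤ) * (lam : ℤ)) = (S : ℤ) * (lam : ℤ) := by
        rw [← Finset.sum_mul, hS]; push_cast; ring
      have h1 : (S : ℤ) * lam - N ≤ c := by
        rw [← heq]; rw [hS'] at hsum; linarith [hy.2]
      rw [hc] at h1
      have hNlt : (N : ℤ) ≤ (lam : ℤ) + (mu : ℤ) - 1 := by
        have : N + 1 ≤ lam + mu := hlt
        omega
      nlinarith
end

section
/- Let a_1,...,a_{m-1} be a 3-distributable multiset of positive integers with sum S, and let c = λS − μ with 3 ≤ λ ≤ ⌈(S+1)/2⌉, 1 ≤ μ ≤ λ − 1, and cS even. Then every 2-colouring of {0,1,...,2λ−μ−1} admits a monochromatic solution to a_1 x_1 + ... + a_{m-1} x_{m-1} − x_m = (λ−1)S − (μ−1); consequently Rad_2(a_1,...,a_{m-1},−1; c) ≤ 2λ − μ. -/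
/-!
Under a 2-colouring of `μ - 1 < λ - 1 < λ < 2λ - μ - 1` (written `m`, `m + d`, `m + d + 1`,
`m + 2d` below), either `λ - 1` shares its colour with one of the other three values, or those
three share a colour. In each case some combination `∑ sⱼ vⱼ - y` of same-coloured values, with
weights `sⱼ ≥ 0` summing to `S`, equals `(λ - 1)S - (μ - 1)`; in the last case with `S` odd this
needs `λ - μ` even, which is what `cS` even gives. By 3-distributability the coefficients `aᵢ`
can be grouped to realize these weights. Shifting all variables by one then gives a solution
with constant `c` in `{1, …, 2λ - μ}`.
-/

def MonoSolnIcc {k : ℕ} {α : Type*} (a : Fin k → ℕ) (b lo hi : ℤ) (χ : ℤ → α) : Prop :=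
  ∃ (x : Fin k → ℤ) (y : ℤ), (∀ i, x i ∈ Finset.Icc lo hi) ∧ y ∈ Finset.Icc lo hi ∧
    ((∑ i, (a i : ℤ) * x i) - y = b) ∧ (∀ i, χ (x i) = χ y)

namespace MonoSolnIcc

variable {k : ℕ} {α : Type*} {a : Fin k → ℕ} {b lo hi : ℤ} {χ : ℤ → α}

theorem shift (s : ℤ) (h : MonoSolnIcc a b lo hi (fun z => χ (z + s))) :
    MonoSolnIcc a (b + s * (∑ i, (a i : ℤ) - 1)) (lo + s) (hi + s) χ := by
  obtain ⟨x, y, hx, hy, hb, hχ⟩ := h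
  refine ⟨fun i => x i + s, y + s, fun i => ?_, ?_, ?_, hχ⟩
  · have := hx i
    simp only [Finset.mem_Icc] at this ⊢
    omega
  · simp only [Finset.mem_Icc] at hy ⊢
    omega
  · simp only [mul_add, Finset.sum_add_distrib, ← Finset.sum_mul]
    linear_combination hb

end MonoSolnIcc

namespace TDistributable

variable {k t : ℕ} {a : Fin k → ℕ}

theorem exists_sum_mul_comp_eq {R : Type*} [CommSemiring R] (h : TDistributable a t)
    {σ : Fin t → ℕ} (hσ : ∑ j, σ j = ∑ i, a i) (v : Fin t → R) :
    ∃ f : Fin k → Fin t, ∑ i, (a i : R) * v (f i) = ∑ j, (σ j : R) * v j := by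
  obtain ⟨f, hf⟩ := h σ hσ
  refine ⟨f, ?_⟩
  rw [← Finset.sum_fiberwise Finset.univ f]
  refine Finset.sum_congr rfl fun j _ => ?_
  rw [← hf j, Nat.cast_sum, Finset.sum_mul]
  exact Finset.sum_congr rfl fun i hi => by rw [(Finset.mem_filter.mp hi).2]

theorem monoSolnIcc {α : Type*} {b lo hi : ℤ} {χ : ℤ → α} (h : TDistributable a t)
    (σ : Fin t → ℕ) (hσ : ∑ j, σ j = ∑ i, a i) (v : Fin t → ℤ) (y : ℤ)
    (hv : ∀ j, v j ∈ Finset.Icc lo hi) (hy : y ∈ Finset.Icc lo hi) (hχ : ∀ j, χ (v j) = χ y)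
    (hb : ∑ j, (σ j : ℤ) * v j - y = b) : MonoSolnIcc a b lo hi χ := by
  obtain ⟨f, hf⟩ := h.exists_sum_mul_comp_eq hσ v
  exact ⟨v ∘ f, y, fun i => hv (f i), hy, hf ▸ hb, fun i => hχ (f i)⟩

theorem monoSolnIcc_fin_two (h : TDistributable a 3) {S m d : ℕ} (hS : ∑ i, a i = S)
    (hdS : d ≤ S) (hpar : Odd S → Even d) (χ : ℤ → Fin 2) :
    MonoSolnIcc a ((m + d) * S - m) 0 (m + 2 * d) χ := by
  by_cases h1 : χ m = χ (m + d)
  · refine h.monoSolnIcc ![S, 0, 0] ?_ ![m + d, m + d, m + d] m ?_ ?_ ?_ ?_ <;>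
      simp [Fin.sum_univ_three, Fin.forall_fin_succ, hS, h1] <;>
      first | omega | ring
  have hd : d ≠ 0 := by rintro rfl; simp at h1
  by_cases h2 : χ (m + d + 1) = χ (m + d)
  · refine h.monoSolnIcc ![d, S - d, 0] ?_ ![m + d + 1, m + d, m + d] (m + d) ?_ ?_ ?_ ?_ <;>
      simp [Fin.sum_univ_three, Fin.forall_fin_succ, hS, h2, Nat.cast_sub hdS] <;>
      first | omega | ring
  by_cases h3 : χ (m + 2 * d) = χ (m + d)
  · refine h.monoSolnIcc ![1, S - 1, 0] ?_ ![m + 2 * d, m + d, m + d] (m + d) ?_ ?_ ?_ ?_ <;>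
      simp [Fin.sum_univ_three, Fin.forall_fin_succ, hS, h3,
        Nat.cast_sub (show 1 ≤ S by omega)] <;>
      first | omega | ring
  -- with only two colours, everything avoiding the colour of `m + d` shares one colour
  have h12 : χ (m + d + 1) = χ m := by omega
  have h13 : χ (m + 2 * d) = χ m := by omega
  rcases Nat.even_or_odd' S with ⟨t, rfl | rfl⟩
  · refine h.monoSolnIcc ![t, t, 0] ?_ ![m, m + 2 * d, m] m ?_ ?_ ?_ ?_ <;>
      simp [Fin.sum_univ_three, Fin.forall_fin_succ, hS, h13] <;>
      first | omega | ring
  · obtain ⟨u, hu⟩ := hpar (odd_two_mul_add_one t)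
    obtain ⟨s, rfl⟩ : ∃ s, t = u + s := ⟨t - u, by omega⟩
    refine h.monoSolnIcc ![s + 1, d, s] ?_ ![m, m + d + 1, m + 2 * d] m ?_ ?_ ?_ ?_ <;>
      simp [Fin.sum_univ_three, Fin.forall_fin_succ, hS, h12, h13] <;>
      first | omega | (subst hu; push_cast; ring)

end TDistributable

theorem rado_upper_lambda_mu_2_general (k : ℕ) (a : Fin k → ℕ)
    (hdist : TDistributable a 3) (S : ℕ) (hS : S = ∑ i, a i)
    (lam mu : ℕ) (hlam2 : lam ≤ (S + 2) / 2)
    (hmu1 : 1 ≤ mu) (hmu2 : mu ≤ lam - 1)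
    (c : ℤ) (hc : c = (lam : ℤ) * (S : ℤ) - mu) (he : Even (c * S)) :
    (∀ χ : ℤ → Fin 2, ∃ (x : Fin k → ℤ) (y : ℤ),
        (∀ i, x i ∈ Finset.Icc (0 : ℤ) (2 * (lam : ℤ) - mu - 1)) ∧
        y ∈ Finset.Icc (0 : ℤ) (2 * (lam : ℤ) - mu - 1) ∧
        ((∑ i, (a i : ℤ) * x i) - y = ((lam : ℤ) - 1) * (S : ℤ) - ((mu : ℤ) - 1)) ∧
        (∀ i, χ (x i) = χ y)) ∧
    (∀ χ : ℤ → Fin 2, MonoSoln a c 2 (2 * lam - mu) χ) := by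
  have hpar : Odd S → Even (lam - mu) := by
    intro hSodd
    have hceven : Even c := (Int.even_mul.mp he).resolve_right (by simpa using hSodd)
    have hS1 : Even ((S : ℤ) - 1) := by
      obtain ⟨t, rfl⟩ := hSodd
      exact ⟨t, by push_cast; ring⟩
    rw [← Int.even_coe_nat, Nat.cast_sub (by omega), show (lam : ℤ) - mu = c - lam * (S - 1) by
      rw [hc]; ring]
    exact hceven.sub (hS1.mul_left lam)
  have hmono (χ : ℤ → Fin 2) :
      MonoSolnIcc a (((lam : ℤ) - 1) * S - ((mu : ℤ) - 1)) 0 (2 * lam - mu - 1) χ := by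
    convert hdist.monoSolnIcc_fin_two (m := mu - 1) hS.symm (by omega) hpar χ using 1 <;>
      push_cast [Nat.cast_sub hmu1, Nat.cast_sub (by omega : mu ≤ lam)] <;> ring
  refine ⟨hmono, fun χ => ?_⟩
  have hSZ : ∑ i, (a i : ℤ) = S := by rw [hS, Nat.cast_sum]
  show MonoSolnIcc a c 1 (2 * lam - mu : ℕ) χ
  convert (hmono fun z => χ (z + 1)).shift 1 using 1 <;>
    push_cast [hSZ, hc, Nat.cast_sub (by omega : mu ≤ 2 * lam)] <;> ring

theorem rado_upper_lambda_mu_2 (k : ℕ) (hk : 0 < k) (a : Fin k → ℕ) (hpos : ∀ i, 0 < a i)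
    (hdist : TDistributable a 3) (S : ℕ) (hS : S = ∑ i, a i)
    (lam mu : ℕ) (hlam1 : 3 ≤ lam) (hlam2 : lam ≤ (S + 2) / 2)
    (hmu1 : 1 ≤ mu) (hmu2 : mu ≤ lam - 1)
    (c : ℤ) (hc : c = (lam : ℤ) * (S : ℤ) - mu) (he : Even (c * S)) :
    (∀ χ : ℤ → Fin 2, ∃ (x : Fin k → ℤ) (y : ℤ),
        (∀ i, x i ∈ Finset.Icc (0 : ℤ) (2 * (lam : ℤ) - mu - 1)) ∧
        y ∈ Finset.Icc (0 : ℤ) (2 * (lam : ℤ) - mu - 1) ∧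
        ((∑ i, (a i : ℤ) * x i) - y = ((lam : ℤ) - 1) * (S : ℤ) - ((mu : ℤ) - 1)) ∧
        (∀ i, χ (x i) = χ y)) ∧
    (∀ χ : ℤ → Fin 2, MonoSoln a c 2 (2 * lam - mu) χ) :=
  rado_upper_lambda_mu_2_general k a hdist S hS lam mu hlam2 hmu1 hmu2 c hc he
end
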